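/- Let p be an odd prime, ζ = exp(2πi/p²). Let A be the p×p complex diagonal matrix with diagonal entries ζ^{1+kp} for k = 0,...,p−1, and let P be the p×p complex matrix with (i,j) entry equal to 1 if i ≡ j−1 (mod p) and 0 otherwise. For every matrix g ≠ I in the subgroup of GL_p(ℂ) generated by A and P, the fixed subspace {v ∈ ℂ^p : g·v = v} has dimension at most 1. Consequently, the set of vectors in ℂ^p fixed by some non-identity element of this subgroup is contained in a finite union of one-dimensional linear subspaces (the group acts freely outside a finite number of lines). -/

import Mathlib

/-!
Write `ω = ζ ^ p`, a primitive `p`-th root of unity. Conjugation by `P` multiplies `A` by the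
central scalar `ω`, so every element of `⟨A, P⟩` is `ω ^ c • A ^ m * P ^ n`; in particular the
group is finite. Such an element maps `v` to `i ↦ λᵢ * v (i + n)`. If `p ∤ n`, the shift by
`n` is transitive on `Fin p`, so a fixed vector is determined by its coordinate `0`. If `p ∣ n`
the element is diagonal with entries `ζ ^ (p * c + m) * (ω ^ m) ^ i`: a scalar `≠ 1` when
`p ∣ m`, and otherwise pairwise distinct because `ω ^ m` is again a primitive `p`-th root, so
at most one entry is `1`. Either way the fixed space has dimension `≤ 1`, and finitely many
group elements give finitely many lines.
-/

section NormalForm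

variable {M : Type*} [Monoid M] {a x z : M}

theorem pow_mul_pow_eq_of_mul_eq (hzx : Commute z x) (hza : Commute z a)
    (hxa : x * a = z * a * x) (m n : ℕ) :
    x ^ n * a ^ m = z ^ (m * n) * a ^ m * x ^ n := by
  have hxam : x * a ^ m = z ^ m * a ^ m * x := by
    have : SemiconjBy x a (z * a) := hxa
    rw [(this.pow_right m).eq, hza.mul_pow]
  induction n with
  | zero => simp
  | succ n ih =>
    calc x ^ (n + 1) * a ^ m = x * z ^ (m * n) * a ^ m * x ^ n := by
          rw [pow_succ', mul_assoc, ih, ← mul_assoc, ← mul_assoc]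
      _ = z ^ (m * n) * (x * a ^ m) * x ^ n := by
          rw [← (hzx.pow_left _).eq, mul_assoc (z ^ _)]
      _ = z ^ (m * (n + 1)) * a ^ m * x ^ (n + 1) := by
          rw [hxam, pow_succ' x, mul_add, mul_one, pow_add]; simp only [mul_assoc]

theorem exists_eq_pow_mul_pow_mul_pow_of_mem_closure (hzx : Commute z x) (hza : Commute z a)
    (hxa : x * a = z * a * x) {g : M} (hg : g ∈ Submonoid.closure {a, x}) :
    ∃ c m n : ℕ, g = z ^ c * a ^ m * x ^ n := by
  induction hg using Submonoid.closure_induction with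
  | mem g hg =>
    rcases hg with rfl | rfl
    · exact ⟨0, 1, 0, by simp⟩
    · exact ⟨0, 0, 1, by simp⟩
  | one => exact ⟨0, 0, 0, by simp⟩
  | mul g h _ _ hg hh =>
    obtain ⟨c, m, n, rfl⟩ := hg
    obtain ⟨c', m', n', rfl⟩ := hh
    refine ⟨c + c' + m' * n, m + m', n + n', ?_⟩
    calc z ^ c * a ^ m * x ^ n * (z ^ c' * a ^ m' * x ^ n')
        = z ^ c * (z ^ c' * (a ^ m * ((x ^ n * a ^ m') * x ^ n'))) := by
          simp only [mul_assoc, (hzx.pow_pow c' n).symm.left_comm,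
            (hza.pow_pow c' m).symm.left_comm]
      _ = z ^ (c + c' + m' * n) * a ^ (m + m') * x ^ (n + n') := by
          rw [pow_mul_pow_eq_of_mul_eq hzx hza hxa]
          simp only [pow_add, mul_assoc, (hza.pow_pow (m' * n) m).symm.left_comm]

end NormalForm

theorem Units.val_mem_closure_image_of_mem_closure {M : Type*} [Monoid M] {s : Set Mˣ}
    (hs : ∀ x ∈ s, IsOfFinOrder x) {g : Mˣ} (hg : g ∈ Subgroup.closure s) :
    (g : M) ∈ Submonoid.closure (Units.val '' s) := by
  rw [← Subgroup.mem_toSubmonoid, Subgroup.closure_toSubmonoid_of_isOfFinOrder hs] at hg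
  have := Submonoid.mem_map_of_mem (Units.coeHom M) hg
  rwa [MonoidHom.map_mclosure] at this

theorem finrank_le_one_of_apply_eq_zero {K ι : Type*} [Field K] (W : Submodule K (ι → K))
    (k : ι) (h : ∀ v ∈ W, v k = 0 → v = 0) : Module.finrank K W ≤ 1 := by
  have hinj : Function.Injective ((LinearMap.proj k : (ι → K) →ₗ[K] K) ∘ₗ W.subtype) :=
    (injective_iff_map_eq_zero _).2 fun v hv => Subtype.ext (h v v.2 hv)
  simpa using LinearMap.finrank_le_finrank_of_injective hinj

theorem exists_finset_finrank_eq_one_cover {K V ι : Type*} [Field K] [AddCommGroup V]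
    [Module K V] [FiniteDimensional K V] [Nontrivial V] [Finite ι] (W : ι → Submodule K V)
    (hW : ∀ i, Module.finrank K (W i) ≤ 1) :
    ∃ s : Finset (Submodule K V), (∀ L ∈ s, Module.finrank K L = 1) ∧
      ⋃ i, (W i : Set V) ⊆ ⋃ L ∈ s, (L : Set V) := by
  obtain ⟨v₀, hv₀⟩ := exists_ne (0 : V)
  -- the extra line `K ∙ v₀` covers the zero vector when every `W i` is `⊥`
  have hfin : ({K ∙ v₀} ∪ {L | L ∈ Set.range W ∧ Module.finrank K L = 1}).Finite :=
    (Set.finite_singleton _).union ((Set.finite_range W).subset fun _ hL => hL.1)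
  refine ⟨hfin.toFinset, fun L hL => ?_, fun v hv => ?_⟩
  · rcases hfin.mem_toFinset.1 hL with rfl | ⟨-, hL⟩
    · exact finrank_span_singleton hv₀
    · exact hL
  · obtain ⟨i, hvi⟩ := Set.mem_iUnion.1 hv
    rcases (hW i).lt_or_eq with hi | hi
    · have : W i = ⊥ := Submodule.finrank_eq_zero.1 (by omega)
      rw [this] at hvi
      exact Set.mem_biUnion (hfin.mem_toFinset.2 (Or.inl rfl))
        (by simp [(Submodule.mem_bot K).1 hvi])
    · exact Set.mem_biUnion (hfin.mem_toFinset.2 (Or.inr ⟨⟨i, rfl⟩, hi⟩)) hvi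

section MatrixLemmas

open Matrix

theorem isOfFinOrder_diagonal {R ι : Type*} [CommSemiring R] [Fintype ι] [DecidableEq ι]
    {d : ι → R} {N : ℕ} (hN : 0 < N) (hd : ∀ i, d i ^ N = 1) : IsOfFinOrder (diagonal d) :=
  isOfFinOrder_iff_pow_eq_one.2
    ⟨N, hN, by rw [diagonal_pow, show d ^ N = fun _ => 1 from funext hd, diagonal_one]⟩

theorem mem_ker_mulVecLin_sub_id {R ι : Type*} [CommRing R] [Fintype ι] {M : Matrix ι ι R}
    {v : ι → R} : v ∈ LinearMap.ker (M.mulVecLin - LinearMap.id) ↔ M *ᵥ v = v := by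
  simp [sub_eq_zero]

theorem finrank_ker_diagonal_sub_id_le_one {K ι : Type*} [Field K] [Fintype ι] [DecidableEq ι]
    [Nonempty ι] {e : ι → K} (he : {i | e i = 1}.Subsingleton) :
    Module.finrank K (LinearMap.ker ((diagonal e).mulVecLin - LinearMap.id)) ≤ 1 := by
  obtain ⟨k, hk⟩ : ∃ k, ∀ i, e i = 1 → i = k := by
    by_cases h : ∃ k, e k = 1
    · obtain ⟨k, hk⟩ := h
      exact ⟨k, fun i hi => he hi hk⟩
    · exact ⟨Classical.arbitrary ι, fun i hi => (h ⟨i, hi⟩).elim⟩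
  refine finrank_le_one_of_apply_eq_zero _ k fun v hv hvk => funext fun i => ?_
  have hvi : e i * v i = v i := by
    simpa [mulVec_diagonal] using congr_fun (mem_ker_mulVecLin_sub_id.1 hv) i
  by_cases hi : e i = 1
  · rw [hk i hi]; exact hvk
  · exact (mul_left_eq_self₀.1 hvi).resolve_left hi

end MatrixLemmas

section CyclicShift

open Matrix Fin.NatCast Fin.CommRing

theorem Fin.eq_zero_of_apply_add_eq_zero {α : Type*} [Zero α] {p n : ℕ} [Fact p.Prime]
    (hn : ¬ p ∣ n) {v : Fin p → α} (hv : ∀ i, v (i + n) = 0 → v i = 0) (h0 : v 0 = 0) :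
    v = 0 := by
  have hp : p.Prime := Fact.out
  have hv' : ∀ k : ℕ, ∀ i, v (i + (k * n : ℕ)) = 0 → v i = 0 := by
    intro k
    induction k with
    | zero => simp
    | succ k ih =>
      intro i hi
      refine ih i (hv _ ?_)
      rwa [add_assoc, ← Nat.cast_add, ← Nat.succ_mul]
  obtain ⟨m, -, hm⟩ := Nat.exists_mul_mod_eq_one_of_coprime
    ((Nat.Prime.coprime_iff_not_dvd hp).2 hn).symm hp.one_lt
  funext j
  refine hv' ((p - j) * m) j ?_
  have hnm : ((n * m : ℕ) : Fin p) = 1 := by rw [CharP.cast_eq_mod (Fin p) p, hm, Nat.cast_one]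
  have hj : j + (((p - j) * m * n : ℕ) : Fin p) = 0 := by
    push_cast [Nat.cast_sub j.isLt.le] at hnm ⊢
    rw [CharP.cast_eq_zero]
    linear_combination (-j) * hnm
  rwa [hj]

variable {R : Type*} {p : ℕ} [NeZero p]

def cyclicShiftMatrix (R : Type*) [Zero R] [One R] (p : ℕ) [NeZero p] :
    Matrix (Fin p) (Fin p) R :=
  of fun i j => if i = j - 1 then 1 else 0

theorem cyclicShiftMatrix_mulVec [Semiring R] (v : Fin p → R) :
    cyclicShiftMatrix R p *ᵥ v = fun i => v (i + 1) := by
  ext i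
  simp [cyclicShiftMatrix, mulVec, dotProduct, eq_sub_iff_add_eq, eq_comm]

theorem cyclicShiftMatrix_pow_mulVec [Semiring R] (n : ℕ) (v : Fin p → R) :
    cyclicShiftMatrix R p ^ n *ᵥ v = fun i => v (i + n) := by
  induction n generalizing v with
  | zero => simp
  | succ n ih =>
    rw [pow_succ, ← mulVec_mulVec, cyclicShiftMatrix_mulVec, ih]
    ext i
    simp [add_assoc]

theorem cyclicShiftMatrix_pow_self [Semiring R] : cyclicShiftMatrix R p ^ p = 1 := by
  rw [ext_iff_mulVec]
  intro v
  simp [cyclicShiftMatrix_pow_mulVec]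

theorem isOfFinOrder_cyclicShiftMatrix [Semiring R] : IsOfFinOrder (cyclicShiftMatrix R p) :=
  isOfFinOrder_iff_pow_eq_one.2 ⟨p, Nat.pos_of_neZero p, cyclicShiftMatrix_pow_self⟩

theorem cyclicShiftMatrix_mul_diagonal [CommSemiring R] {d : Fin p → R} {ω : R}
    (hd : ∀ i, d (i + 1) = ω * d i) :
    cyclicShiftMatrix R p * diagonal d =
      diagonal (fun _ => ω) * diagonal d * cyclicShiftMatrix R p := by
  rw [ext_iff_mulVec]
  intro v
  ext i
  simp [← mulVec_mulVec, cyclicShiftMatrix_mulVec, mulVec_diagonal, hd, mul_assoc]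

theorem diagonal_pow_mul_diagonal_pow_mul_cyclicShiftMatrix_pow_mulVec [CommSemiring R]
    (ω : R) (d : Fin p → R) (c m n : ℕ) (v : Fin p → R) :
    (diagonal (fun _ => ω) ^ c * diagonal d ^ m * cyclicShiftMatrix R p ^ n) *ᵥ v =
      fun i => ω ^ c * d i ^ m * v (i + n) := by
  ext i
  simp [diagonal_pow, ← mulVec_mulVec, cyclicShiftMatrix_pow_mulVec, mulVec_diagonal, mul_assoc]

end CyclicShift

theorem IsPrimitiveRoot.injective_mul_pow_val {R : Type*} [CommRing R] [IsDomain R] {η μ : R}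
    {p : ℕ} (hη : IsPrimitiveRoot η p) (hμ : μ ≠ 0) :
    Function.Injective fun i : Fin p => μ * η ^ (i : ℕ) :=
  fun i j h => Fin.ext (hη.pow_inj i.isLt j.isLt (mul_left_cancel₀ hμ h))

section TwistedClock

open Matrix

def twistedClockMatrix {R : Type*} [Semiring R] (ζ : R) (p : ℕ) : Matrix (Fin p) (Fin p) R :=
  diagonal fun k : Fin p => ζ ^ (1 + (k : ℕ) * p)

variable {K : Type*} [Field K] {p : ℕ} [NeZero p] {ζ : K}

theorem pow_one_add_val_add_one_mul (hζ : ζ ^ p ^ 2 = 1) (i : Fin p) :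
    ζ ^ (1 + ((i + 1 : Fin p) : ℕ) * p) = ζ ^ p * ζ ^ (1 + (i : ℕ) * p) := by
  have hω : (ζ ^ p) ^ p = 1 := by rw [← pow_mul, ← sq, hζ]
  calc ζ ^ (1 + ((i + 1 : Fin p) : ℕ) * p) = ζ * (ζ ^ p) ^ ((i : ℕ) + 1) := by
        rw [pow_eq_pow_mod _ hω, Fin.val_add, Fin.val_one', Nat.add_mod_mod]; ring
    _ = ζ ^ p * ζ ^ (1 + (i : ℕ) * p) := by ring

theorem isOfFinOrder_twistedClockMatrix (hζ : ζ ^ p ^ 2 = 1) :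
    IsOfFinOrder (twistedClockMatrix ζ p) :=
  isOfFinOrder_diagonal (pow_pos (Nat.pos_of_neZero p) 2) fun k => by
    rw [← pow_mul, mul_comm, pow_mul, hζ, one_pow]

theorem exists_eq_of_mem_closure_twistedClockMatrix (hζ : ζ ^ p ^ 2 = 1)
    {A P : (Matrix (Fin p) (Fin p) K)ˣ}
    (hA : (A : Matrix (Fin p) (Fin p) K) = twistedClockMatrix ζ p)
    (hP : (P : Matrix (Fin p) (Fin p) K) = cyclicShiftMatrix K p)
    {g : (Matrix (Fin p) (Fin p) K)ˣ} (hg : g ∈ Subgroup.closure {A, P}) :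
    ∃ c m n : ℕ, (g : Matrix (Fin p) (Fin p) K) =
      diagonal (fun _ => ζ ^ p) ^ c * twistedClockMatrix ζ p ^ m * cyclicShiftMatrix K p ^ n := by
  have hfin : ∀ x ∈ ({A, P} : Set (Matrix (Fin p) (Fin p) K)ˣ), IsOfFinOrder x := by
    rintro x (rfl | rfl) <;> rw [← Units.isOfFinOrder_val]
    · rw [hA]; exact isOfFinOrder_twistedClockMatrix hζ
    · rw [hP]; exact isOfFinOrder_cyclicShiftMatrix
  have hg' := Units.val_mem_closure_image_of_mem_closure hfin hg
  rw [Set.image_pair, hA, hP] at hg'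
  exact exists_eq_pow_mul_pow_mul_pow_of_mem_closure (scalar_commute _ (Commute.all _) _)
    (scalar_commute _ (Commute.all _) _)
    (cyclicShiftMatrix_mul_diagonal (pow_one_add_val_add_one_mul hζ)) hg'

theorem finite_closure_twistedClockMatrix (hζ : ζ ^ p ^ 2 = 1)
    {A P : (Matrix (Fin p) (Fin p) K)ˣ}
    (hA : (A : Matrix (Fin p) (Fin p) K) = twistedClockMatrix ζ p)
    (hP : (P : Matrix (Fin p) (Fin p) K) = cyclicShiftMatrix K p) :
    (Subgroup.closure {A, P} : Set (Matrix (Fin p) (Fin p) K)ˣ).Finite := by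
  have hω : IsOfFinOrder (diagonal fun _ : Fin p => ζ ^ p) :=
    isOfFinOrder_diagonal (Nat.pos_of_neZero p) fun _ => by rw [← pow_mul, ← sq, hζ]
  have hT := (hω.finite_powers.mul (isOfFinOrder_twistedClockMatrix hζ).finite_powers).mul
    (isOfFinOrder_cyclicShiftMatrix (R := K) (p := p)).finite_powers
  refine (hT.preimage Units.val_injective.injOn).subset fun g hg => ?_
  obtain ⟨c, m, n, hg⟩ := exists_eq_of_mem_closure_twistedClockMatrix hζ hA hP hg
  rw [Set.mem_preimage, hg]
  exact Set.mul_mem_mul (Set.mul_mem_mul ⟨c, rfl⟩ ⟨m, rfl⟩) ⟨n, rfl⟩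

end TwistedClock

open Matrix in
theorem finrank_ker_mulVecLin_sub_id_le_one_of_eq_twistedClock {K : Type*} [Field K] {p : ℕ}
    [Fact p.Prime] {ζ : K} (hζ : IsPrimitiveRoot ζ (p ^ 2))
    {M : Matrix (Fin p) (Fin p) K} {c m n : ℕ}
    (hM : M = diagonal (fun _ => ζ ^ p) ^ c * twistedClockMatrix ζ p ^ m *
      cyclicShiftMatrix K p ^ n) (hg : M ≠ 1) :
    Module.finrank K (LinearMap.ker (M.mulVecLin - LinearMap.id)) ≤ 1 := by
  subst hM
  have hp : p.Prime := Fact.out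
  have hω : IsPrimitiveRoot (ζ ^ p) p := hζ.pow (pow_pos hp.pos 2) (sq p)
  have hμ : ζ ^ (p * c + m) ≠ 0 := pow_ne_zero _ (hζ.ne_zero (pow_ne_zero 2 hp.ne_zero))
  by_cases hn : p ∣ n
  · obtain ⟨n, rfl⟩ := hn
    have hdiag : diagonal (fun _ => ζ ^ p) ^ c * twistedClockMatrix ζ p ^ m *
        cyclicShiftMatrix K p ^ (p * n) =
        diagonal fun i : Fin p => ζ ^ (p * c + m) * ((ζ ^ p) ^ m) ^ (i : ℕ) := by
      rw [pow_mul, cyclicShiftMatrix_pow_self, one_pow, mul_one, twistedClockMatrix, diagonal_pow,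
        diagonal_pow, diagonal_mul_diagonal]
      congr 1
      ext i
      simp only [Pi.pow_apply]
      ring
    rw [hdiag] at hg ⊢
    apply finrank_ker_diagonal_sub_id_le_one
    by_cases hm : p ∣ m
    · rw [hω.pow_eq_one_iff_dvd m |>.2 hm] at hg ⊢
      simp only [one_pow, mul_one] at hg ⊢
      exact fun i hi => (hg (by rw [hi, diagonal_one])).elim
    · exact Set.subsingleton_singleton.preimage ((hω.pow_of_coprime m
        ((Nat.Prime.coprime_iff_not_dvd hp).2 hm).symm).injective_mul_pow_val hμ)
  · refine finrank_le_one_of_apply_eq_zero _ 0 fun v hv hv0 => ?_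
    have hfix := mem_ker_mulVecLin_sub_id.1 hv
    rw [twistedClockMatrix, diagonal_pow_mul_diagonal_pow_mul_cyclicShiftMatrix_pow_mulVec] at hfix
    exact Fin.eq_zero_of_apply_add_eq_zero hn
      (fun i hi => by rw [← congr_fun hfix i, hi, mul_zero]) hv0

theorem mp_rep_acts_freely_off_lines_general (p : ℕ) [Fact p.Prime]
    (ζ : ℂ) (hζ : ζ = Complex.exp (2 * Real.pi * Complex.I / (p ^ 2 : ℕ)))
    (A P : (Matrix (Fin p) (Fin p) ℂ)ˣ)
    (hA : (A : Matrix (Fin p) (Fin p) ℂ)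
        = Matrix.diagonal fun k : Fin p => ζ ^ (1 + (k : ℕ) * p))
    (hP : (P : Matrix (Fin p) (Fin p) ℂ)
        = Matrix.of fun i j : Fin p => if i = j - 1 then (1 : ℂ) else 0) :
    (∀ g ∈ Subgroup.closure {A, P}, g ≠ 1 →
      Module.finrank ℂ
        (LinearMap.ker ((g : Matrix (Fin p) (Fin p) ℂ).mulVecLin
          - (LinearMap.id : (Fin p → ℂ) →ₗ[ℂ] (Fin p → ℂ)))) ≤ 1) ∧
    ∃ s : Finset (Submodule ℂ (Fin p → ℂ)),
      (∀ W ∈ s, Module.finrank ℂ W = 1) ∧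
      {v : Fin p → ℂ | ∃ g ∈ Subgroup.closure {A, P}, g ≠ 1 ∧
          (g : Matrix (Fin p) (Fin p) ℂ).mulVec v = v}
        ⊆ ⋃ W ∈ s, (W : Set (Fin p → ℂ)) := by
  have hζ : IsPrimitiveRoot ζ (p ^ 2) :=
    hζ ▸ Complex.isPrimitiveRoot_exp _ (pow_ne_zero 2 (NeZero.ne p))
  have hA : (A : Matrix (Fin p) (Fin p) ℂ) = twistedClockMatrix ζ p := hA
  have hP : (P : Matrix (Fin p) (Fin p) ℂ) = cyclicShiftMatrix ℂ p := hP
  have hfix : ∀ g ∈ Subgroup.closure {A, P}, g ≠ 1 → Module.finrank ℂ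
      (LinearMap.ker ((g : Matrix (Fin p) (Fin p) ℂ).mulVecLin - LinearMap.id)) ≤ 1 := by
    intro g hg hg1
    obtain ⟨c, m, n, hgcmn⟩ :=
      exists_eq_of_mem_closure_twistedClockMatrix hζ.pow_eq_one hA hP hg
    exact finrank_ker_mulVecLin_sub_id_le_one_of_eq_twistedClock hζ hgcmn (Units.val_eq_one.not.2 hg1)
  have : Finite {g // g ∈ Subgroup.closure {A, P} ∧ g ≠ 1} :=
    ((finite_closure_twistedClockMatrix hζ.pow_eq_one hA hP).subset fun _ hg => hg.1).to_subtype
  obtain ⟨s, hs, hcover⟩ := exists_finset_finrank_eq_one_cover (K := ℂ)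
    (ι := {g // g ∈ Subgroup.closure {A, P} ∧ g ≠ 1})
    (fun g => LinearMap.ker ((g.1 : Matrix (Fin p) (Fin p) ℂ).mulVecLin - LinearMap.id))
    fun g => hfix g.1 g.2.1 g.2.2
  refine ⟨hfix, s, hs, ?_⟩
  rintro v ⟨g, hg, hg1, hv⟩
  exact hcover (Set.mem_iUnion.2 ⟨⟨g, hg, hg1⟩, mem_ker_mulVecLin_sub_id.2 hv⟩)

/-- Let `p` be an odd prime, `ζ = exp(2πi/p²)`, `A` the diagonal
matrix with entries `ζ^(1+kp)` for `k = 0, …, p-1` and `P` the cyclic permutation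
matrix, both viewed as units of the matrix ring.  Every non-identity element `g` of the
subgroup generated by `A` and `P` has fixed subspace `{v : g·v = v}` of dimension at
most `1`; consequently the set of vectors fixed by some non-identity element of this
subgroup is contained in a finite union of one-dimensional linear subspaces. -/
theorem mp_rep_acts_freely_off_lines (p : ℕ) [Fact p.Prime] (hp : Odd p)
    (ζ : ℂ) (hζ : ζ = Complex.exp (2 * Real.pi * Complex.I / (p ^ 2 : ℕ)))
    (A P : (Matrix (Fin p) (Fin p) ℂ)ˣ)
    (hA : (A : Matrix (Fin p) (Fin p) ℂ)
        = Matrix.diagonal fun k : Fin p => ζ ^ (1 + (k : ℕ) * p))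
    (hP : (P : Matrix (Fin p) (Fin p) ℂ)
        = Matrix.of fun i j : Fin p => if i = j - 1 then (1 : ℂ) else 0) :
    (∀ g ∈ Subgroup.closure {A, P}, g ≠ 1 →
      Module.finrank ℂ
        (LinearMap.ker ((g : Matrix (Fin p) (Fin p) ℂ).mulVecLin
          - (LinearMap.id : (Fin p → ℂ) →ₗ[ℂ] (Fin p → ℂ)))) ≤ 1) ∧
    ∃ s : Finset (Submodule ℂ (Fin p → ℂ)),
      (∀ W ∈ s, Module.finrank ℂ W = 1) ∧
      {v : Fin p → ℂ | ∃ g ∈ Subgroup.closure {A, P}, g ≠ 1 ∧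
          (g : Matrix (Fin p) (Fin p) ℂ).mulVec v = v}
        ⊆ ⋃ W ∈ s, (W : Set (Fin p → ℂ)) :=
  mp_rep_acts_freely_off_lines_general p ζ hζ A P hA hP
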